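/- arXiv:1806.06439 — 3 statements merged into one kernel-verified Lean document; each statement's English description precedes it below -/
import Mathlib

section
/- Let n = 2^r. Define the binary-tree specialist basis B_{p,q} recursively: B_{p,q} = {intervals [p,q] with labels -1 and +1} if p = q, and otherwise B_{p,q} = {[p,q] with both labels} ∪ B_{p,⌊(p+q)/2⌋} ∪ B_{⌈(p+q)/2⌉,q}; let B_n = B_{1,n}. Then for any labeling u ∈ {-1,1}^n of the path graph with cut-size Φ, there exists a subset C ⊆ B_n covering u (every vertex v is contained in some interval-specialist of C whose label equals u_v, and no specialist in C covers any vertex with a wrong label) with |C| ≤ 2(Φ+1)⌈log₂(n/2)⌉ for n > 2. -/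
/-- The binary-tree cluster-specialist basis `B_{p,q}`: a specialist is a pair
(interval `[l,r]`, label `y : Bool`). -/
def BTB (p q : ℕ) : Finset ((ℕ × ℕ) × Bool) :=
  if h : q ≤ p then {((p, q), false), ((p, q), true)}
  else
    {((p, q), false), ((p, q), true)} ∪ BTB p ((p + q) / 2) ∪ BTB ((p + q + 1) / 2) q
termination_by q - p
decreasing_by
  · omega
  · omega

/-- `C` covers the labeling `u` on vertices `{1,…,n}`: no specialist of `C`
predicts a wrong label on any vertex it covers, and every vertex is covered
by a specialist predicting its label. -/
def Covers (u : ℕ → Bool) (n : ℕ) (C : Finset ((ℕ × ℕ) × Bool)) : Prop :=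
  (∀ s ∈ C, ∀ v, s.1.1 ≤ v → v ≤ s.1.2 → s.2 = u v) ∧
  (∀ v, 1 ≤ v → v ≤ n → ∃ s ∈ C, s.1.1 ≤ v ∧ v ≤ s.1.2 ∧ s.2 = u v)

lemma BTB_unfold {p q : ℕ} (h : p < q) :
    BTB p q = ({((p, q), false), ((p, q), true)} : Finset ((ℕ × ℕ) × Bool))
      ∪ BTB p ((p + q) / 2) ∪ BTB ((p + q + 1) / 2) q := by
  rw [BTB, dif_neg (by omega)]

lemma BTB_self (p q : ℕ) (y : Bool) : ((p, q), y) ∈ BTB p q := by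
  rw [BTB]
  split <;> cases y <;> simp

lemma BTB_left_subset {p q : ℕ} (h : p < q) : BTB p ((p + q) / 2) ⊆ BTB p q := by
  rw [BTB_unfold h]; intro x hx
  simp only [Finset.mem_union]; tauto

lemma BTB_right_subset {p q : ℕ} (h : p < q) : BTB ((p + q + 1) / 2) q ⊆ BTB p q := by
  rw [BTB_unfold h]; intro x hx
  simp only [Finset.mem_union]; tauto

lemma single_cover (p q l r : ℕ) (y : Bool) (hl : l ≤ p) (hr : q ≤ r) :
    ∃ C ⊆ BTB p q, (∀ s ∈ C, l ≤ s.1.1 ∧ s.1.2 ≤ r ∧ s.2 = y) ∧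
      (∀ v, p ≤ v → v ≤ q → ∃ s ∈ C, s.1.1 ≤ v ∧ v ≤ s.1.2) ∧
      C.card ≤ 1 := by
  refine ⟨{((p, q), y)}, ?_, ?_, ?_, by simp⟩
  · intro x hx
    rw [Finset.mem_singleton] at hx
    subst hx; exact BTB_self p q y
  · intro s hs
    rw [Finset.mem_singleton] at hs
    subst hs; exact ⟨hl, hr, rfl⟩
  · intro v h1 h2
    exact ⟨((p, q), y), Finset.mem_singleton_self _, h1, h2⟩

lemma alignedLeft : ∀ k p q b : ℕ, ∀ y : Bool, p + 2 ^ k = q + 1 → p ≤ b → b ≤ q →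
    ∃ C ⊆ BTB p q, (∀ s ∈ C, p ≤ s.1.1 ∧ s.1.2 ≤ b ∧ s.2 = y) ∧
      (∀ v, p ≤ v → v ≤ b → ∃ s ∈ C, s.1.1 ≤ v ∧ v ≤ s.1.2) ∧
      C.card ≤ max 1 k := by
  intro k
  induction k with
  | zero =>
    intro p q b y h hpb hbq
    obtain ⟨C, h1, h2, h3, h4⟩ := single_cover p q p b y le_rfl (by omega)
    exact ⟨C, h1, h2, fun v hv1 hv2 => h3 v hv1 (by omega), by omega⟩
  | succ k ih =>
    intro p q b y h hpb hbq
    have he : 1 ≤ 2 ^ k := Nat.one_le_two_pow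
    have h2 : 2 ^ (k + 1) = 2 * 2 ^ k := by ring
    have hpq : p < q := by omega
    have hm : (p + q) / 2 = p + 2 ^ k - 1 := by omega
    have hm2 : (p + q + 1) / 2 = p + 2 ^ k := by omega
    by_cases hbq' : b = q
    · obtain ⟨C, h1', h2', h3, h4⟩ := single_cover p q p b y le_rfl (by omega)
      exact ⟨C, h1', h2', fun v hv1 hv2 => h3 v hv1 (by omega), by omega⟩
    by_cases hbm : b ≤ p + 2 ^ k - 1
    · obtain ⟨C, hC1, hC2, hC3, hC4⟩ := ih p (p + 2 ^ k - 1) b y (by omega) hpb hbm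
      refine ⟨C, hC1.trans ?_, hC2, hC3, hC4.trans (by omega)⟩
      rw [← hm]; exact BTB_left_subset hpq
    · have hk : 1 ≤ k := by
        by_contra hk0
        have hk0' : k = 0 := by omega
        subst hk0'
        omega
      obtain ⟨C, hC1, hC2, hC3, hC4⟩ := ih (p + 2 ^ k) q b y (by omega) (by omega) hbq
      refine ⟨insert ((p, p + 2 ^ k - 1), y) C, ?_, ?_, ?_, ?_⟩
      · intro x hx
        rcases Finset.mem_insert.mp hx with rfl | hx
        · have : ((p, p + 2 ^ k - 1), y) ∈ BTB p ((p + q) / 2) := by rw [hm]; exact BTB_self _ _ _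
          exact BTB_left_subset hpq this
        · have hmem := hC1 hx
          rw [← hm2] at hmem
          exact BTB_right_subset hpq hmem
      · intro s hs
        rcases Finset.mem_insert.mp hs with rfl | hs
        · exact ⟨le_refl _, show p + 2 ^ k - 1 ≤ b by omega, rfl⟩
        · obtain ⟨a1, a2, a3⟩ := hC2 s hs
          exact ⟨by omega, a2, a3⟩
      · intro v h1 hv2
        by_cases hv : v ≤ p + 2 ^ k - 1
        · exact ⟨((p, p + 2 ^ k - 1), y), Finset.mem_insert_self _ _, h1, hv⟩
        · obtain ⟨s, hs, b1, b2⟩ := hC3 v (by omega) hv2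
          exact ⟨s, Finset.mem_insert_of_mem hs, b1, b2⟩
      · calc (insert ((p, p + 2 ^ k - 1), y) C).card ≤ C.card + 1 := Finset.card_insert_le _ _
          _ ≤ max 1 k + 1 := by omega
          _ ≤ max 1 (k + 1) := by omega

lemma alignedRight : ∀ k p q a : ℕ, ∀ y : Bool, p + 2 ^ k = q + 1 → p ≤ a → a ≤ q →
    ∃ C ⊆ BTB p q, (∀ s ∈ C, a ≤ s.1.1 ∧ s.1.2 ≤ q ∧ s.2 = y) ∧
      (∀ v, a ≤ v → v ≤ q → ∃ s ∈ C, s.1.1 ≤ v ∧ v ≤ s.1.2) ∧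
      C.card ≤ max 1 k := by
  intro k
  induction k with
  | zero =>
    intro p q a y h hpa haq
    obtain ⟨C, h1, h2, h3, h4⟩ := single_cover p q a q y (by omega) le_rfl
    exact ⟨C, h1, h2, fun v hv1 hv2 => h3 v (by omega) hv2, by omega⟩
  | succ k ih =>
    intro p q a y h hpa haq
    have he : 1 ≤ 2 ^ k := Nat.one_le_two_pow
    have h2 : 2 ^ (k + 1) = 2 * 2 ^ k := by ring
    have hpq : p < q := by omega
    have hm : (p + q) / 2 = p + 2 ^ k - 1 := by omega
    have hm2 : (p + q + 1) / 2 = p + 2 ^ k := by omega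
    by_cases hap : a = p
    · obtain ⟨C, h1', h2', h3, h4⟩ := single_cover p q a q y (by omega) le_rfl
      exact ⟨C, h1', h2', fun v hv1 hv2 => h3 v (by omega) hv2, by omega⟩
    by_cases ham : p + 2 ^ k ≤ a
    · obtain ⟨C, hC1, hC2, hC3, hC4⟩ := ih (p + 2 ^ k) q a y (by omega) ham haq
      refine ⟨C, hC1.trans ?_, hC2, hC3, hC4.trans (by omega)⟩
      rw [← hm2]; exact BTB_right_subset hpq
    · have hk : 1 ≤ k := by
        by_contra hk0
        have hk0' : k = 0 := by omega
        subst hk0'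
        omega
      obtain ⟨C, hC1, hC2, hC3, hC4⟩ := ih p (p + 2 ^ k - 1) a y (by omega) hpa (by omega)
      refine ⟨insert ((p + 2 ^ k, q), y) C, ?_, ?_, ?_, ?_⟩
      · intro x hx
        rcases Finset.mem_insert.mp hx with rfl | hx
        · have : ((p + 2 ^ k, q), y) ∈ BTB ((p + q + 1) / 2) q := by rw [hm2]; exact BTB_self _ _ _
          exact BTB_right_subset hpq this
        · have hmem := hC1 hx
          rw [← hm] at hmem
          exact BTB_left_subset hpq hmem
      · intro s hs
        rcases Finset.mem_insert.mp hs with rfl | hs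
        · exact ⟨show a ≤ p + 2 ^ k by omega, le_refl _, rfl⟩
        · obtain ⟨a1, a2, a3⟩ := hC2 s hs
          exact ⟨a1, by omega, a3⟩
      · intro v h1 hv2
        by_cases hv : v ≤ p + 2 ^ k - 1
        · obtain ⟨s, hs, b1, b2⟩ := hC3 v h1 hv
          exact ⟨s, Finset.mem_insert_of_mem hs, b1, b2⟩
        · exact ⟨((p + 2 ^ k, q), y), Finset.mem_insert_self _ _, show p + 2 ^ k ≤ v by omega, hv2⟩
      · calc (insert ((p + 2 ^ k, q), y) C).card ≤ C.card + 1 := Finset.card_insert_le _ _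
          _ ≤ max 1 k + 1 := by omega
          _ ≤ max 1 (k + 1) := by omega

lemma genCover : ∀ k p q a b : ℕ, ∀ y : Bool, p + 2 ^ k = q + 1 → p ≤ a → a ≤ b → b ≤ q →
    ∃ C ⊆ BTB p q, (∀ s ∈ C, a ≤ s.1.1 ∧ s.1.2 ≤ b ∧ s.2 = y) ∧
      (∀ v, a ≤ v → v ≤ b → ∃ s ∈ C, s.1.1 ≤ v ∧ v ≤ s.1.2) ∧
      C.card ≤ max 1 (2 * k - 2) := by
  intro k
  induction k with
  | zero =>
    intro p q a b y h hpa hab hbq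
    obtain ⟨C, h1, h2, h3, h4⟩ := single_cover p q a b y (by omega) (by omega)
    exact ⟨C, h1, h2, fun v hv1 hv2 => h3 v (by omega) (by omega), by omega⟩
  | succ k ih =>
    intro p q a b y h hpa hab hbq
    have he : 1 ≤ 2 ^ k := Nat.one_le_two_pow
    have h2 : 2 ^ (k + 1) = 2 * 2 ^ k := by ring
    have hpq : p < q := by omega
    have hm : (p + q) / 2 = p + 2 ^ k - 1 := by omega
    have hm2 : (p + q + 1) / 2 = p + 2 ^ k := by omega
    by_cases htop : a = p ∧ b = q
    · obtain ⟨C, h1', h2', h3, h4⟩ := single_cover p q a b y (by omega) (by omega)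
      exact ⟨C, h1', h2', fun v hv1 hv2 => h3 v (by omega) (by omega), by omega⟩
    by_cases hbm : b ≤ p + 2 ^ k - 1
    · obtain ⟨C, hC1, hC2, hC3, hC4⟩ := ih p (p + 2 ^ k - 1) a b y (by omega) hpa hab hbm
      refine ⟨C, hC1.trans ?_, hC2, hC3, hC4.trans (by omega)⟩
      rw [← hm]; exact BTB_left_subset hpq
    by_cases ham : p + 2 ^ k ≤ a
    · obtain ⟨C, hC1, hC2, hC3, hC4⟩ := ih (p + 2 ^ k) q a b y (by omega) ham hab hbq
      refine ⟨C, hC1.trans ?_, hC2, hC3, hC4.trans (by omega)⟩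
      rw [← hm2]; exact BTB_right_subset hpq
    · -- a ≤ p + 2^k - 1 < b, split
      have hk : 1 ≤ k := by
        by_contra hk0
        have hk0' : k = 0 := by omega
        subst hk0'
        exact htop ⟨by omega, by omega⟩
      obtain ⟨C1, hC1a, hC1b, hC1c, hC1d⟩ :=
        alignedRight k p (p + 2 ^ k - 1) a y (by omega) hpa (by omega)
      obtain ⟨C2, hC2a, hC2b, hC2c, hC2d⟩ :=
        alignedLeft k (p + 2 ^ k) q b y (by omega) (by omega) hbq
      refine ⟨C1 ∪ C2, ?_, ?_, ?_, ?_⟩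
      · intro x hx
        rcases Finset.mem_union.mp hx with hx | hx
        · have hmem := hC1a hx
          rw [← hm] at hmem
          exact BTB_left_subset hpq hmem
        · have hmem := hC2a hx
          rw [← hm2] at hmem
          exact BTB_right_subset hpq hmem
      · intro s hs
        rcases Finset.mem_union.mp hs with hs | hs
        · obtain ⟨a1, a2, a3⟩ := hC1b s hs
          exact ⟨a1, by omega, a3⟩
        · obtain ⟨a1, a2, a3⟩ := hC2b s hs
          exact ⟨by omega, a2, a3⟩
      · intro v h1 hv2
        by_cases hv : v ≤ p + 2 ^ k - 1
        · obtain ⟨s, hs, b1, b2⟩ := hC1c v h1 hv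
          exact ⟨s, Finset.mem_union_left _ hs, b1, b2⟩
        · obtain ⟨s, hs, b1, b2⟩ := hC2c v (by omega) hv2
          exact ⟨s, Finset.mem_union_right _ hs, b1, b2⟩
      · calc (C1 ∪ C2).card ≤ C1.card + C2.card := Finset.card_union_le _ _
          _ ≤ max 1 k + max 1 k := by omega
          _ ≤ max 1 (2 * (k + 1) - 2) := by omega

lemma eq_of_no_cut (u : ℕ → Bool) (a : ℕ) : ∀ v, (∀ i, a ≤ i → i < v → u i = u (i + 1)) →
    a ≤ v → u v = u a := by
  intro v
  induction v with
  | zero =>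
    intro _ hav
    have ha0 : a = 0 := by omega
    rw [ha0]
  | succ v ihv =>
    intro h hav
    rcases Nat.eq_or_lt_of_le hav with heq | hlt
    · rw [heq]
    · have h1 : u v = u a := ihv (fun i hi1 hi2 => h i hi1 (by omega)) (by omega)
      rw [← h v (by omega) (by omega), h1]

lemma runCover (r n : ℕ) (hn : n = 2 ^ r) (u : ℕ → Bool) :
    ∀ d a, n - a ≤ d → 1 ≤ a → a ≤ n →
      ∃ C ⊆ BTB 1 n, (∀ s ∈ C, ∀ v, s.1.1 ≤ v → v ≤ s.1.2 → s.2 = u v) ∧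
        (∀ v, a ≤ v → v ≤ n → ∃ s ∈ C, s.1.1 ≤ v ∧ v ≤ s.1.2 ∧ s.2 = u v) ∧
        C.card ≤ (((Finset.Icc a (n - 1)).filter (fun i => u i ≠ u (i + 1))).card + 1)
          * max 1 (2 * r - 2) := by
  have hn1 : 1 + 2 ^ r = n + 1 := by omega
  intro d
  induction d using Nat.strong_induction_on with
  | _ d ih =>
    intro a hd ha1 han
    by_cases hcut : ∃ i, a ≤ i ∧ i + 1 ≤ n ∧ u i ≠ u (i + 1)
    · -- there is a cut; b = first cut
      set b := Nat.find hcut with hb_def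
      obtain ⟨hab, hbn, hcb⟩ := Nat.find_spec hcut
      have hmin : ∀ i, a ≤ i → i < b → u i = u (i + 1) := by
        intro i h1 h2
        have := Nat.find_min hcut h2
        by_contra hne
        exact this ⟨h1, by omega, hne⟩
      have hconst : ∀ v, a ≤ v → v ≤ b → u v = u a := by
        intro v h1 h2
        exact eq_of_no_cut u a v (fun i hi1 hi2 => hmin i hi1 (by omega)) h1
      obtain ⟨C1, hC1a, hC1b, hC1c, hC1d⟩ :=
        genCover r 1 n a b (u a) hn1 ha1 hab (by omega)
      obtain ⟨C2, hC2a, hC2b, hC2c, hC2d⟩ :=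
        ih (n - (b + 1)) (by omega) (b + 1) le_rfl (by omega) (by omega)
      have hcard : ((Finset.Icc (b + 1) (n - 1)).filter (fun i => u i ≠ u (i + 1))).card + 1
          ≤ ((Finset.Icc a (n - 1)).filter (fun i => u i ≠ u (i + 1))).card := by
        have hsub : insert b ((Finset.Icc (b + 1) (n - 1)).filter (fun i => u i ≠ u (i + 1)))
            ⊆ (Finset.Icc a (n - 1)).filter (fun i => u i ≠ u (i + 1)) := by
          intro i hi
          rcases Finset.mem_insert.mp hi with rfl | hi
          · simp only [Finset.mem_filter, Finset.mem_Icc]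
            exact ⟨⟨hab, by omega⟩, hcb⟩
          · simp only [Finset.mem_filter, Finset.mem_Icc] at hi ⊢
            exact ⟨⟨by omega, hi.1.2⟩, hi.2⟩
        have hnm : b ∉ (Finset.Icc (b + 1) (n - 1)).filter (fun i => u i ≠ u (i + 1)) := by
          simp only [Finset.mem_filter, Finset.mem_Icc]
          omega
        have hle := Finset.card_le_card hsub
        rw [Finset.card_insert_of_notMem hnm] at hle
        omega
      refine ⟨C1 ∪ C2, Finset.union_subset hC1a hC2a, ?_, ?_, ?_⟩
      · intro s hs v hv1 hv2
        rcases Finset.mem_union.mp hs with hs | hs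
        · obtain ⟨a1, a2, a3⟩ := hC1b s hs
          rw [a3, hconst v (by omega) (by omega)]
        · exact hC2b s hs v hv1 hv2
      · intro v h1 h2
        by_cases hv : v ≤ b
        · obtain ⟨s, hs, b1, b2⟩ := hC1c v h1 hv
          obtain ⟨a1, a2, a3⟩ := hC1b s hs
          exact ⟨s, Finset.mem_union_left _ hs, b1, b2,
            by rw [a3, hconst v (by omega) (by omega)]⟩
        · obtain ⟨s, hs, b1, b2, b3⟩ := hC2c v (by omega) h2
          exact ⟨s, Finset.mem_union_right _ hs, b1, b2, b3⟩
      · set M := max 1 (2 * r - 2)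
        set X2 := ((Finset.Icc (b + 1) (n - 1)).filter (fun i => u i ≠ u (i + 1))).card
        calc (C1 ∪ C2).card ≤ C1.card + C2.card := Finset.card_union_le _ _
          _ ≤ M + (X2 + 1) * M := by omega
          _ = (X2 + 2) * M := by ring
          _ ≤ (((Finset.Icc a (n - 1)).filter (fun i => u i ≠ u (i + 1))).card + 1) * M :=
            Nat.mul_le_mul_right M (by omega)
    · -- no cut : u constant on [a, n]
      push_neg at hcut
      have hconst : ∀ v, a ≤ v → v ≤ n → u v = u a := by
        intro v h1 h2
        exact eq_of_no_cut u a v (fun i hi1 hi2 => hcut i hi1 (by omega)) h1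
      obtain ⟨C, hCa, hCb, hCc, hCd⟩ := genCover r 1 n a n (u a) hn1 ha1 han le_rfl
      refine ⟨C, hCa, ?_, ?_, ?_⟩
      · intro s hs v hv1 hv2
        obtain ⟨a1, a2, a3⟩ := hCb s hs
        rw [a3, hconst v (by omega) (by omega)]
      · intro v h1 h2
        obtain ⟨s, hs, b1, b2⟩ := hCc v h1 h2
        obtain ⟨a1, a2, a3⟩ := hCb s hs
        exact ⟨s, hs, b1, b2, by rw [a3, hconst v (by omega) (by omega)]⟩
      · exact hCd.trans (Nat.le_mul_of_pos_left _ (by omega))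

/-- For `n = 2^r > 2` and any labeling `u` of the path on `{1,…,n}` with cut-size
`Φ`, there is a covering set `C ⊆ B_n = BTB 1 n` with
`|C| ≤ 2 (Φ + 1) ⌈log₂ (n/2)⌉`. -/
theorem BTB_covering_bound
    (r n : ℕ) (hn : n = 2 ^ r) (hn2 : 2 < n) (u : ℕ → Bool) :
    ∃ C ⊆ BTB 1 n, Covers u n C ∧
      C.card ≤ 2 * (((Finset.Icc 1 (n - 1)).filter (fun i => u i ≠ u (i + 1))).card + 1)
        * Nat.clog 2 (n / 2) := by
  have hr2 : 2 ≤ r := by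
    by_contra hr
    interval_cases r <;> simp_all
  have hclog : Nat.clog 2 (n / 2) = r - 1 := by
    have hdiv : n / 2 = 2 ^ (r - 1) := by
      rw [hn]
      rw [show r = (r - 1) + 1 by omega, pow_succ]
      exact Nat.mul_div_cancel _ (by norm_num)
    rw [hdiv, Nat.clog_pow 2 (r - 1) (by norm_num)]
  obtain ⟨C, hCa, hCb, hCc, hCd⟩ := runCover r n hn u (n - 1) 1 le_rfl le_rfl (by omega)
  refine ⟨C, hCa, ⟨hCb, hCc⟩, ?_⟩
  rw [hclog]
  have hmax : max 1 (2 * r - 2) = 2 * r - 2 := by omega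
  rw [hmax] at hCd
  calc C.card ≤ (((Finset.Icc 1 (n - 1)).filter (fun i => u i ≠ u (i + 1))).card + 1)
        * (2 * r - 2) := hCd
    _ = 2 * (((Finset.Icc 1 (n - 1)).filter (fun i => u i ≠ u (i + 1))).card + 1) * (r - 1) := by
      have : 2 * r - 2 = 2 * (r - 1) := by omega
      rw [this]; ring
end

section
/- Let μ, ω ∈ Δ_N (the probability simplex on N outcomes) with ω_ε > 0 for all ε. Suppose ω' is obtained from ω by a Halving loss update with respect to disjoint sets A ⊇ C (active and correct specialists): ω'_ε = 0 for ε ∈ A \ C, ω'_ε = ω_ε for ε ∉ A, and ω'_ε = ω_ε · ω(A)/ω(C) for ε ∈ C, where ω(S) = Σ_{ε∈S} ω_ε and ω(C) > 0. If μ is supported within C ∪ (complement of A) (i.e., μ_ε = 0 for ε ∈ A \ C) and μ(C) > 0, and if ω(C) ≤ ω(A)/2, then D(μ‖ω) − D(μ‖ω') ≥ μ(C), where D(μ‖ω) = Σ_ε μ_ε log₂(μ_ε/ω_ε). -/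
open Real

/-- Halving loss-update progress bound: if the correct specialists `C ⊆ A` held
at most half of the active mass (`ω(C) ≤ ω(A)/2`, i.e. a mistake occurred), then
the loss update decreases the relative entropy to any comparator `μ` supported
away from `A \ C` by at least `μ(C)`. -/
theorem halving_update_progress
    {N : ℕ} (μ ω ω' : Fin N → ℝ) (A C : Finset (Fin N))
    (hμ0 : ∀ ε, 0 ≤ μ ε) (hμ1 : ∑ ε, μ ε = 1)
    (hω0 : ∀ ε, 0 < ω ε) (hω1 : ∑ ε, ω ε = 1)
    (hCA : C ⊆ A)
    (hωC : 0 < ∑ e ∈ C, ω e)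
    (h1 : ∀ ε ∈ A \ C, ω' ε = 0)
    (h2 : ∀ ε ∉ A, ω' ε = ω ε)
    (h3 : ∀ ε ∈ C, ω' ε = ω ε * (∑ e ∈ A, ω e) / (∑ e ∈ C, ω e))
    (hμsupp : ∀ ε ∈ A \ C, μ ε = 0)
    (hμC : 0 < ∑ ε ∈ C, μ ε)
    (hhalf : ∑ e ∈ C, ω e ≤ (∑ e ∈ A, ω e) / 2) :
    ∑ ε ∈ C, μ ε ≤
      (∑ ε, μ ε * Real.logb 2 (μ ε / ω ε)) -
      (∑ ε, μ ε * Real.logb 2 (μ ε / ω' ε)) := by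
  set wA := ∑ e ∈ A, ω e with hwAdef
  set wC := ∑ e ∈ C, ω e with hwCdef
  have hwA : wC ≤ wA := Finset.sum_le_sum_of_subset_of_nonneg hCA
    (fun i _ _ => (hω0 i).le)
  have hwApos : 0 < wA := lt_of_lt_of_le hωC hwA
  have hr2 : 2 ≤ wA / wC := by
    rw [le_div_iff₀ hωC]; linarith
  have hrpos : 0 < wA / wC := by positivity
  rw [← Finset.sum_sub_distrib]
  have hsum : ∑ ε, (μ ε * Real.logb 2 (μ ε / ω ε) - μ ε * Real.logb 2 (μ ε / ω' ε))
      = ∑ ε ∈ C, μ ε * Real.logb 2 (wA / wC) := by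
    rw [← Finset.sum_subset (Finset.subset_univ C)]
    · refine Finset.sum_congr rfl (fun ε hε => ?_)
      rcases eq_or_lt_of_le (hμ0 ε) with h | h
      · simp [← h]
      · have hω' : ω' ε = ω ε * wA / wC := h3 ε hε
        have h4 : μ ε / ω' ε = (μ ε / ω ε) / (wA / wC) := by
          rw [hω']; field_simp
        have h5 : Real.logb 2 (μ ε / ω' ε)
            = Real.logb 2 (μ ε / ω ε) - Real.logb 2 (wA / wC) := by
          rw [h4]
          exact Real.logb_div (div_ne_zero (ne_of_gt h) (ne_of_gt (hω0 ε))) (ne_of_gt hrpos)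
        rw [h5]; ring
    · intro ε _ hεC
      by_cases hA : ε ∈ A
      · have : μ ε = 0 := hμsupp ε (Finset.mem_sdiff.2 ⟨hA, hεC⟩)
        simp [this]
      · rw [h2 ε hA]; ring
  rw [hsum]
  have h1le : (1 : ℝ) ≤ Real.logb 2 (wA / wC) := by
    rw [show (1:ℝ) = Real.logb 2 2 by simp]
    exact Real.logb_le_logb_of_le one_lt_two (by norm_num) hr2
  calc ∑ ε ∈ C, μ ε = ∑ ε ∈ C, μ ε * 1 := by simp
    _ ≤ ∑ ε ∈ C, μ ε * Real.logb 2 (wA / wC) :=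
        Finset.sum_le_sum (fun i _ => mul_le_mul_of_nonneg_left h1le (hμ0 i))
end

section
/- Self-referential mistake bound resolution: suppose M, Z, r are reals with M ≥ 2, Z ≥ 2, r ≥ 0, log Z ≥ 2, r log(M−1) ≥ 2 (logs base 2), and M ≤ Z + r·log₂(M−1). Then M ≤ Z + r·log₂ Z + r·log₂ r + r·log₂ log₂ (M−1). -/
open Real

/-- Resolution of the self-referential mistake bound `M ≤ Z + r log₂(M−1)`. -/
theorem self_referential_bound
    (M Z r : ℝ) (hM : 2 ≤ M) (hZ : 2 ≤ Z) (hr : 0 ≤ r)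
    (hlogZ : 2 ≤ Real.logb 2 Z)
    (hrlog : 2 ≤ r * Real.logb 2 (M - 1))
    (h : M ≤ Z + r * Real.logb 2 (M - 1)) :
    M ≤ Z + r * Real.logb 2 Z + r * Real.logb 2 r
        + r * Real.logb 2 (Real.logb 2 (M - 1)) := by
  set L := Real.logb 2 (M - 1) with hLdef
  have hr' : 0 < r := by
    rcases hr.lt_or_eq with h' | h'
    · exact h'
    · exfalso; rw [← h'] at hrlog; simp at hrlog; linarith
  have hL : 0 < L := by
    nlinarith
  -- a + b ≤ a * b for a, b ≥ 2
  have hsum : Z + r * L ≤ Z * (r * L) := by nlinarith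
  have hM1 : (0:ℝ) < M - 1 := by linarith
  have hstep : L ≤ Real.logb 2 (Z * (r * L)) := by
    rw [hLdef]
    exact Real.logb_le_logb_of_le one_lt_two hM1 (by linarith)
  have hmul : Real.logb 2 (Z * (r * L)) = Real.logb 2 Z + Real.logb 2 r + Real.logb 2 L := by
    rw [Real.logb_mul (by positivity) (by positivity),
        Real.logb_mul (by positivity) (by positivity)]
    ring
  have hLfin : L ≤ Real.logb 2 Z + Real.logb 2 r + Real.logb 2 L := hmul ▸ hstep
  nlinarith [mul_le_mul_of_nonneg_left hLfin hr]
end
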